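/- arXiv:2103.16124 — 2 statements merged into one kernel-verified Lean document; each statement's English description precedes it below -/
import Mathlib

section
/- Let χ be a Dirichlet character of conductor f, N ≥ 1, and S_n(x) = Σ_{a=1}^{f} χ(a)(x+a)^n. Then for n ≥ 1: binomial(N+n, n)^{-1} · Σ_{i=0}^{n} binomial(N+n, i) · B_{N,i,χ}(x) · f^{N+n-i} = S_n(x). -/
open PowerSeries Finset

noncomputable def eSer (c : ℂ) : PowerSeries ℂ := PowerSeries.mk fun n => c ^ n / n.factorial

noncomputable def dSer (N f : ℕ) : PowerSeries ℂ :=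
  PowerSeries.mk fun m => (N.factorial : ℂ) * (f : ℂ) ^ m / (N + m).factorial

noncomputable def hB (N n : ℕ) : ℂ :=
  n.factorial * PowerSeries.coeff n (dSer N 1)⁻¹

noncomputable def hBP (N n : ℕ) (x : ℂ) : ℂ :=
  n.factorial * PowerSeries.coeff n (eSer x * (dSer N 1)⁻¹)

noncomputable def gBP (N f : ℕ) (χ : DirichletCharacter ℂ f) (n : ℕ) (x : ℂ) : ℂ :=
  n.factorial * PowerSeries.coeff n
    (((f : ℂ) ^ N)⁻¹ • ((∑ a ∈ Finset.Icc 1 f, (PowerSeries.C (χ (a : ZMod f))) * eSer (x + a)) * (dSer N f)⁻¹))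

noncomputable def gB (N f : ℕ) (χ : DirichletCharacter ℂ f) (n : ℕ) : ℂ := gBP N f χ n 0

/-!
The generating function `F` of the `B_{N,i,χ}(x) / i!` satisfies `f^N • F * D = Σ_a χ(a) e^{(x+a)t}`,
where `D = Σ_m N! (ft)^m / (N+m)!` is `t^{-N} N! / f^N` times the denominator
`e^{ft} - Σ_{k<N} (ft)^k / k!`. Comparing coefficients of `t^n` and multiplying by `(N+n)!`
turns the Cauchy product `F * D` into the binomial sum on the left, and `e^{(x+a)t}` contributes
`(x+a)^n / n!`; the factor `(N+n)! / (N! n!)` is the binomial coefficient that is divided out.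
-/

open scoped Nat

noncomputable def twistedExpSum (f : ℕ) (χ : DirichletCharacter ℂ f) (x : ℂ) : PowerSeries ℂ :=
  ∑ a ∈ Icc 1 f, C (χ (a : ZMod f)) * eSer (x + a)

lemma coeff_eSer (c : ℂ) (n : ℕ) : coeff n (eSer c) = c ^ n / n ! := by
  simp [eSer]

lemma coeff_dSer (N f m : ℕ) : coeff m (dSer N f) = N ! * (f : ℂ) ^ m / (N + m)! := by
  simp [dSer]

lemma constantCoeff_dSer (N f : ℕ) : constantCoeff (dSer N f) = 1 := by
  simp [dSer, N.factorial_ne_zero]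

lemma coeff_twistedExpSum (f : ℕ) (χ : DirichletCharacter ℂ f) (x : ℂ) (n : ℕ) :
    coeff n (twistedExpSum f χ x) = ∑ a ∈ Icc 1 f, χ (a : ZMod f) * (x + a) ^ n / n ! := by
  simp only [twistedExpSum, map_sum, coeff_C_mul, coeff_eSer, mul_div_assoc]

lemma gBP_eq_factorial_mul_coeff (N f : ℕ) (χ : DirichletCharacter ℂ f) (i : ℕ) (x : ℂ) :
    gBP N f χ i x =
      i ! * coeff i (((f : ℂ) ^ N)⁻¹ • (twistedExpSum f χ x * (dSer N f)⁻¹)) :=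
  rfl

lemma coeff_smul_mul_inv_dSer_mul_dSer (N f n : ℕ) (c : ℂ) (G : PowerSeries ℂ) :
    coeff n (c • (G * (dSer N f)⁻¹) * dSer N f) = c * coeff n G := by
  rw [smul_mul_assoc, mul_assoc, PowerSeries.inv_mul_cancel _ (by simp [constantCoeff_dSer]),
    mul_one, coeff_smul, smul_eq_mul]

lemma sum_choose_mul_factorial_coeff_mul_pow (N f n : ℕ) (F : PowerSeries ℂ) :
    ∑ i ∈ range (n + 1), ((N + n).choose i : ℂ) * (i ! * coeff i F) * (f : ℂ) ^ (N + n - i) =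
      (N + n)! / N ! * (f : ℂ) ^ N * coeff n (F * dSer N f) := by
  rw [coeff_mul, Nat.sum_antidiagonal_eq_sum_range_succ_mk, mul_sum]
  refine sum_congr rfl fun i hi => ?_
  have hin : i ≤ n := Nat.lt_succ_iff.mp (mem_range.mp hi)
  have hsub : N + n - i = N + (n - i) := by omega
  rw [coeff_dSer, Nat.cast_choose ℂ (by omega : i ≤ N + n), hsub, pow_add]
  field_simp [Nat.cast_ne_zero.2 (Nat.factorial_ne_zero _)]

theorem stmt13_general (N f : ℕ) (hf : 0 < f) (χ : DirichletCharacter ℂ f)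
    (n : ℕ) (x : ℂ) :
    (((N + n).choose n : ℂ))⁻¹ *
      ∑ i ∈ Finset.range (n + 1), ((N + n).choose i : ℂ) * gBP N f χ i x * (f : ℂ) ^ (N + n - i) =
    ∑ a ∈ Finset.Icc 1 f, χ (a : ZMod f) * (x + (a : ℂ)) ^ n := by
  have hfN : (f : ℂ) ^ N ≠ 0 := pow_ne_zero _ (Nat.cast_ne_zero.2 hf.ne')
  simp only [gBP_eq_factorial_mul_coeff]
  rw [sum_choose_mul_factorial_coeff_mul_pow, coeff_smul_mul_inv_dSer_mul_dSer,
    coeff_twistedExpSum, add_comm N n, Nat.cast_add_choose, mul_sum, mul_sum, mul_sum]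
  refine sum_congr rfl fun a _ => ?_
  field_simp [hfN, Nat.cast_ne_zero.2 (Nat.factorial_ne_zero _)]

theorem stmt13 (N f : ℕ) (hN : 1 ≤ N) (hf : 0 < f) (χ : DirichletCharacter ℂ f)
    (hχ : χ.IsPrimitive) (n : ℕ) (hn : 1 ≤ n) (x : ℂ) :
    (((N + n).choose n : ℂ))⁻¹ *
      ∑ i ∈ Finset.range (n + 1), ((N + n).choose i : ℂ) * gBP N f χ i x * (f : ℂ) ^ (N + n - i) =
    ∑ a ∈ Finset.Icc 1 f, χ (a : ZMod f) * (x + (a : ℂ)) ^ n :=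
  stmt13_general N f hf χ n x
end

section
/- Let χ be a Dirichlet character of conductor f, N ≥ 1, S_m = Σ_{a=1}^{f} χ(a) a^m, and define T_r(k) = (-N!)^r · Σ_{i_1+⋯+i_r = k, i_j ≥ 1} 1/((N+i_1)!···(N+i_r)!) with T_0(0) = 1 and T_0(k) = 0 for k ≥ 1. Then for n ≥ 1: B_{N,n,χ} = Σ_{k=0}^{n} (k!/f^{N-k}) · binomial(n,k) · Σ_{r=0}^{k} T_r(k) · S_{n-k}. -/
open PowerSeries Finset

/-!
Write the denominator as `dSer N f = 1 - u` with `u` of zero constant term. Then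
`(dSer N f)⁻¹ = ∑ r, u ^ r`, and the coefficient of `t ^ k` in `u ^ r` is a sum over the
compositions of `k` into `r` positive parts, which gives `f ^ k * ∑ r, T_r(k)`. Multiplying by
the exponential series `e^{(x + a) t}` and taking the Cauchy product yields the formula, for every
shift `x`.
-/
section CommSemiring

variable {R : Type*} [CommSemiring R]

lemma PowerSeries.coeff_pow_eq_sum_antidiagonalTuple (r n : ℕ) (φ : R⟦X⟧) :
    coeff n (φ ^ r) = ∑ i ∈ Finset.Nat.antidiagonalTuple r n, ∏ j, coeff (i j) φ := by
  rw [← Fin.prod_const, coeff_prod]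
  refine Finset.sum_nbij' Finsupp.equivFunOnFinite Finsupp.equivFunOnFinite.symm ?_ ?_
    (fun _ _ => by simp) (fun _ _ => by simp) (fun _ _ => rfl)
  · intro l hl
    rw [Finset.mem_finsuppAntidiag] at hl
    rw [Finset.Nat.mem_antidiagonalTuple, ← hl.1]
    rfl
  · intro i hi
    rw [Finset.Nat.mem_antidiagonalTuple] at hi
    rw [Finset.mem_finsuppAntidiag]
    exact ⟨by rw [← hi]; rfl, by simp⟩

lemma PowerSeries.coeff_pow_eq_sum_antidiagonalTuple_pos {φ : R⟦X⟧} (hφ : constantCoeff φ = 0)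
    (r n : ℕ) :
    coeff n (φ ^ r) = ∑ i ∈ (Finset.Nat.antidiagonalTuple r n).filter (fun i => ∀ j, 1 ≤ i j),
      ∏ j, coeff (i j) φ := by
  rw [coeff_pow_eq_sum_antidiagonalTuple, Finset.sum_filter_of_ne]
  intro i _ hprod j
  by_contra! hij
  rw [Nat.lt_one_iff] at hij
  exact hprod <|
    Finset.prod_eq_zero (Finset.mem_univ j) (by rw [hij, coeff_zero_eq_constantCoeff, hφ])

end CommSemiring

lemma PowerSeries.coeff_inv_one_sub_eq_sum_pow {k : Type*} [Field k] {u : k⟦X⟧}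
    (hu : constantCoeff u = 0) (n : ℕ) :
    coeff n (1 - u)⁻¹ = ∑ r ∈ Finset.range (n + 1), coeff n (u ^ r) := by
  have hinv : (1 - u)⁻¹ * (1 - u) = 1 := PowerSeries.inv_mul_cancel _ (by simp [hu])
  have hgeom : (1 - u)⁻¹ = ∑ r ∈ Finset.range (n + 1), u ^ r + (1 - u)⁻¹ * u ^ (n + 1) := by
    calc (1 - u)⁻¹ = (1 - u)⁻¹ * ((1 - u) * ∑ r ∈ Finset.range (n + 1), u ^ r + u ^ (n + 1)) := by
          rw [mul_neg_geom_sum, sub_add_cancel, mul_one]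
      _ = _ := by rw [mul_add, ← mul_assoc, hinv, one_mul]
  have htail : coeff n ((1 - u)⁻¹ * u ^ (n + 1)) = 0 :=
    X_pow_dvd_iff.mp ((pow_dvd_pow_of_dvd (X_dvd_iff.mpr hu) _).mul_left _) n (Nat.lt_succ_self n)
  rw [hgeom, map_add, map_sum, htail, add_zero]

/-- The paper's `T_r(k)`. -/
noncomputable def hgT (N r k : ℕ) : ℂ :=
  (-(N.factorial : ℂ)) ^ r *
    ∑ i ∈ (Finset.Nat.antidiagonalTuple r k).filter (fun i => ∀ j, 1 ≤ i j),
      ∏ j, ((N + i j).factorial : ℂ)⁻¹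

lemma constantCoeff_one_sub_dSer (N f : ℕ) : constantCoeff (1 - dSer N f) = 0 := by
  have : (N.factorial : ℂ) ≠ 0 := by exact_mod_cast N.factorial_ne_zero
  simp [dSer, ← coeff_zero_eq_constantCoeff, this]

lemma coeff_one_sub_dSer {m : ℕ} (hm : 1 ≤ m) (N f : ℕ) :
    coeff m (1 - dSer N f) = -(N.factorial : ℂ) * ((f : ℂ) ^ m * ((N + m).factorial : ℂ)⁻¹) := by
  simp [dSer, coeff_one, Nat.one_le_iff_ne_zero.mp hm, div_eq_mul_inv, mul_assoc]

lemma coeff_one_sub_dSer_pow (N f r k : ℕ) :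
    coeff k ((1 - dSer N f) ^ r) = (f : ℂ) ^ k * hgT N r k := by
  rw [coeff_pow_eq_sum_antidiagonalTuple_pos (constantCoeff_one_sub_dSer N f), hgT,
    Finset.mul_sum, Finset.mul_sum]
  refine Finset.sum_congr rfl fun i hi => ?_
  rw [Finset.mem_filter, Finset.Nat.mem_antidiagonalTuple] at hi
  rw [Finset.prod_congr rfl fun j _ => coeff_one_sub_dSer (hi.2 j) N f, Finset.prod_mul_distrib,
    Finset.prod_mul_distrib, Finset.prod_const, Finset.prod_pow_eq_pow_sum, hi.1,
    Finset.card_univ, Fintype.card_fin]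
  ring

lemma coeff_dSer_inv (N f k : ℕ) :
    coeff k (dSer N f)⁻¹ = (f : ℂ) ^ k * ∑ r ∈ Finset.range (k + 1), hgT N r k := by
  rw [← sub_sub_cancel 1 (dSer N f), coeff_inv_one_sub_eq_sum_pow (constantCoeff_one_sub_dSer N f),
    Finset.mul_sum]
  exact Finset.sum_congr rfl fun r _ => coeff_one_sub_dSer_pow N f r k

lemma coeff_eSer_mul (x : ℂ) (ψ : ℂ⟦X⟧) (n : ℕ) :
    coeff n (eSer x * ψ) =
      ∑ k ∈ Finset.range (n + 1), x ^ (n - k) / ((n - k).factorial : ℂ) * coeff k ψ := by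
  rw [coeff_mul, ← Finset.Nat.sum_antidiagonal_swap]
  simp only [Prod.fst_swap, Prod.snd_swap]
  rw [Finset.Nat.sum_antidiagonal_eq_sum_range_succ (fun k l => coeff l (eSer x) * coeff k ψ)]
  simp [eSer]

theorem gBP_eq_sum (N : ℕ) {f : ℕ} (hf : f ≠ 0) (χ : DirichletCharacter ℂ f) (n : ℕ) (x : ℂ) :
    gBP N f χ n x = ∑ k ∈ Finset.range (n + 1),
      (k.factorial : ℂ) / (f : ℂ) ^ ((N : ℤ) - (k : ℤ)) * (n.choose k : ℂ) *
      (∑ r ∈ Finset.range (k + 1), hgT N r k) *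
      (∑ a ∈ Finset.Icc 1 f, χ (a : ZMod f) * (x + a) ^ (n - k)) := by
  simp only [gBP, map_smul, smul_eq_mul, Finset.sum_mul, map_sum, mul_assoc, coeff_C_mul,
    coeff_eSer_mul, coeff_dSer_inv, Finset.mul_sum]
  rw [Finset.sum_comm]
  refine Finset.sum_congr rfl fun k hk => Finset.sum_congr rfl fun a _ => ?_
  have hkn : k ≤ n := Nat.lt_succ_iff.mp (Finset.mem_range.mp hk)
  have hf' : (f : ℂ) ≠ 0 := Nat.cast_ne_zero.mpr hf
  have hnk : ((n - k).factorial : ℂ) ≠ 0 := by exact_mod_cast (n - k).factorial_ne_zero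
  have hk : (k.factorial : ℂ) ≠ 0 := by exact_mod_cast k.factorial_ne_zero
  rw [zpow_sub₀ hf', zpow_natCast, zpow_natCast, Nat.cast_choose ℂ hkn]
  field_simp

theorem stmt14_general (N f : ℕ) (hf : 0 < f) (χ : DirichletCharacter ℂ f) (n : ℕ) :
    gB N f χ n = ∑ k ∈ Finset.range (n + 1),
      (k.factorial : ℂ) / (f : ℂ) ^ ((N : ℤ) - (k : ℤ)) * (n.choose k : ℂ) *
      (∑ r ∈ Finset.range (k + 1),
        ((-(N.factorial : ℂ)) ^ r *
          ∑ i ∈ (Finset.Nat.antidiagonalTuple r k).filter (fun i => ∀ j, 1 ≤ i j),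
            ∏ j, ((N + i j).factorial : ℂ)⁻¹)) *
      (∑ a ∈ Finset.Icc 1 f, χ (a : ZMod f) * (a : ℂ) ^ (n - k)) := by
  simpa only [gB, hgT, zero_add] using gBP_eq_sum N hf.ne' χ n 0

theorem stmt14 (N f : ℕ) (hN : 1 ≤ N) (hf : 0 < f) (χ : DirichletCharacter ℂ f)
    (hχ : χ.IsPrimitive) (n : ℕ) (hn : 1 ≤ n) :
    gB N f χ n = ∑ k ∈ Finset.range (n + 1),
      (k.factorial : ℂ) / (f : ℂ) ^ ((N : ℤ) - (k : ℤ)) * (n.choose k : ℂ) *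
      (∑ r ∈ Finset.range (k + 1),
        ((-(N.factorial : ℂ)) ^ r *
          ∑ i ∈ (Finset.Nat.antidiagonalTuple r k).filter (fun i => ∀ j, 1 ≤ i j),
            ∏ j, ((N + i j).factorial : ℂ)⁻¹)) *
      (∑ a ∈ Finset.Icc 1 f, χ (a : ZMod f) * (a : ℂ) ^ (n - k)) :=
  stmt14_general N f hf χ n
end
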